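/- arXiv:2302.09025 — 5 statements merged into one kernel-verified Lean document; each statement's English description precedes it below -/
import Mathlib

section
/- Let A be a commutative ring, let r, p be natural numbers with 2 ≤ p ≤ r, and let x : Fin r → A be a family of Chern roots of a rank-r bundle. Then the discriminant of the p-th exterior power equals λ_p times the discriminant of the bundle; concretely, (p−1) · [ (∑_{S ⊆ Fin r, |S|=p} ∑_{i∈S} x_i)² − C(r,p) · ∑_{S ⊆ Fin r, |S|=p} (∑_{i∈S} x_i)² ] = C(r−1,p) · C(r−2,p−2) · [ (∑_i x_i)² − r · ∑_i x_i² ]. -/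
open Finset

lemma aux_count {α : Type*} [Fintype α] [DecidableEq α] (p : ℕ) (t : Finset α) (ht : t.card ≤ p) :
    ((univ.powersetCard p).filter (fun S => t ⊆ S)).card
      = (Fintype.card α - t.card).choose (p - t.card) := by
  rw [← Finset.card_compl t, ← Finset.card_powersetCard]
  apply Finset.card_bij (fun S _ => S \ t)
  · intro S hS
    simp only [mem_filter, mem_powersetCard_univ] at hS
    rw [mem_powersetCard]
    exact ⟨fun a ha => by simp [Finset.mem_sdiff.mp ha |>.2],
      by rw [card_sdiff_of_subset hS.2, hS.1]⟩
  · intro S hS S' hS' h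
    simp only [mem_filter] at hS hS'
    rw [← Finset.sdiff_union_of_subset hS.2, ← Finset.sdiff_union_of_subset hS'.2, h]
  · intro T hT
    rw [mem_powersetCard] at hT
    refine ⟨T ∪ t, ?_, ?_⟩
    · simp only [mem_filter, mem_powersetCard_univ]
      constructor
      · rw [card_union_of_disjoint, hT.2]
        · omega
        · exact Finset.disjoint_left.mpr fun a ha => by
            have := hT.1 ha; simp at this; exact this
      · exact subset_union_right
    · rw [Finset.union_sdiff_right]
      exact (Finset.sdiff_eq_self_of_disjoint (Finset.disjoint_left.mpr fun a ha => by
        have := hT.1 ha; simp at this; exact this))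

lemma aux_sum1 {A : Type*} [CommRing A] {α : Type*} [Fintype α] [DecidableEq α]
    (p : ℕ) (hp : 1 ≤ p) (f : α → A) :
    ∑ S ∈ univ.powersetCard p, ∑ i ∈ S, f i
      = ((Fintype.card α - 1).choose (p - 1) : A) * ∑ i, f i := by
  have step1 : ∀ S ∈ univ.powersetCard p, ∑ i ∈ S, f i
      = ∑ i : α, if i ∈ S then f i else 0 := by
    intro S _
    rw [Finset.sum_ite_mem, Finset.univ_inter]
  rw [Finset.sum_congr rfl step1, Finset.sum_comm]
  rw [Finset.mul_sum]
  refine Finset.sum_congr rfl fun i _ => ?_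
  have : ∀ S : Finset α, (i ∈ S) = ({i} ⊆ S) := by intro S; simp
  calc ∑ S ∈ univ.powersetCard p, (if i ∈ S then f i else 0)
      = ∑ S ∈ (univ.powersetCard p).filter (fun S => ({i} : Finset α) ⊆ S), f i := by
        rw [Finset.sum_filter]; exact Finset.sum_congr rfl fun S _ => by simp
    _ = ((Fintype.card α - 1).choose (p - 1) : A) * f i := by
        rw [Finset.sum_const, aux_count p {i} (by simpa using hp)]
        simp [nsmul_eq_mul]

lemma aux_sum2 {A : Type*} [CommRing A] {α : Type*} [Fintype α] [DecidableEq α]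
    (p : ℕ) (hp : 2 ≤ p) (f : α → A) :
    ∑ S ∈ univ.powersetCard p, (∑ i ∈ S, f i) ^ 2
      = ((Fintype.card α - 2).choose (p - 2) : A) * (∑ i, f i) ^ 2
        + (((Fintype.card α - 1).choose (p - 1) : A)
            - ((Fintype.card α - 2).choose (p - 2) : A)) * ∑ i, f i ^ 2 := by
  set n := Fintype.card α
  have step1 : ∀ S ∈ univ.powersetCard p, (∑ i ∈ S, f i) ^ 2
      = ∑ i : α, ∑ j : α, if ({i, j} : Finset α) ⊆ S then f i * f j else 0 := by
    intro S _
    rw [sq, Finset.sum_mul_sum]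
    have h1 : ∀ i : α, ∑ j ∈ S, f i * f j = ∑ j : α, if j ∈ S then f i * f j else 0 := by
      intro i; rw [Finset.sum_ite_mem, Finset.univ_inter]
    rw [Finset.sum_congr rfl (fun i _ => h1 i)]
    have h2 : ∀ g : α → A, ∑ i ∈ S, g i = ∑ i : α, if i ∈ S then g i else 0 := by
      intro g; rw [Finset.sum_ite_mem, Finset.univ_inter]
    rw [h2]
    refine Finset.sum_congr rfl fun i _ => ?_
    by_cases hi : i ∈ S
    · simp only [hi, if_true]
      refine Finset.sum_congr rfl fun j _ => ?_
      congr 1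
      simp [Finset.insert_subset_iff, hi]
    · simp [Finset.insert_subset_iff, hi]
  rw [Finset.sum_congr rfl step1, Finset.sum_comm]
  have step2 : ∀ i j : α,
      (∑ S ∈ univ.powersetCard p, if ({i, j} : Finset α) ⊆ S then f i * f j else 0)
      = (if i = j then ((n - 1).choose (p - 1) : A) else ((n - 2).choose (p - 2) : A))
          * (f i * f j) := by
    intro i j
    rw [← Finset.sum_filter, Finset.sum_const, nsmul_eq_mul]
    congr 1
    by_cases hij : i = j
    · subst hij
      have : ({i, i} : Finset α) = {i} := by simp
      rw [this, aux_count p {i} (by simp; omega)]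
      simp [n]
    · rw [aux_count p {i, j} (by rw [Finset.card_insert_of_notMem (by simpa using hij)]; simp; omega)]
      rw [Finset.card_insert_of_notMem (by simpa using hij)]
      simp [hij, n]
      
  have step3 : ∀ i : α, ∑ j : α,
      (∑ S ∈ univ.powersetCard p, if ({i, j} : Finset α) ⊆ S then f i * f j else 0)
      = ((n - 2).choose (p - 2) : A) * (f i * ∑ j, f j)
        + (((n - 1).choose (p - 1) : A) - ((n - 2).choose (p - 2) : A)) * f i ^ 2 := by
    intro i
    rw [Finset.sum_congr rfl fun j _ => step2 i j]
    have split : ∀ j : α,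
        (if i = j then ((n - 1).choose (p - 1) : A) else ((n - 2).choose (p - 2) : A)) * (f i * f j)
        = ((n - 2).choose (p - 2) : A) * (f i * f j)
          + (if i = j then (((n - 1).choose (p - 1) : A) - ((n - 2).choose (p - 2) : A)) * f i ^ 2 else 0) := by
      intro j
      by_cases hij : i = j
      · subst hij; simp; ring
      · simp [hij]
    rw [Finset.sum_congr rfl fun j _ => split j, Finset.sum_add_distrib,
      Finset.sum_ite_eq univ i _, if_pos (Finset.mem_univ i)]
    simp only [← Finset.mul_sum]
  rw [Finset.sum_congr rfl fun i _ => Finset.sum_comm,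
    Finset.sum_congr rfl fun i _ => step3 i, Finset.sum_add_distrib]
  simp only [← Finset.mul_sum, ← Finset.sum_mul]
  ring

lemma aux_N1 (r p : ℕ) (hp : 2 ≤ p) (hpr : p ≤ r) :
    (p - 1) * (r - 1).choose (p - 1) = (r - 1) * (r - 2).choose (p - 2) := by
  obtain ⟨p', rfl⟩ : ∃ p', p = p' + 2 := ⟨p - 2, by omega⟩
  obtain ⟨m, rfl⟩ : ∃ m, r = p' + 2 + m := ⟨r - (p' + 2), by omega⟩
  have h := Nat.add_one_mul_choose_eq (p' + m) p'
  simp only [show p' + 2 - 1 = p' + 1 from rfl, show p' + 2 - 2 = p' from rfl,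
    show p' + 2 + m - 1 = p' + m + 1 from by omega, show p' + 2 + m - 2 = p' + m from by omega]
  rw [mul_comm]
  exact h.symm

lemma aux_N2 (r p : ℕ) (hp : 1 ≤ p) (hpr : p ≤ r) :
    p * r.choose p = r * (r - 1).choose (p - 1) := by
  obtain ⟨p', rfl⟩ : ∃ p', p = p' + 1 := ⟨p - 1, by omega⟩
  obtain ⟨m, rfl⟩ : ∃ m, r = p' + 1 + m := ⟨r - (p' + 1), by omega⟩
  have h := Nat.add_one_mul_choose_eq (p' + m) p'
  simp only [show p' + 1 - 1 = p' from rfl, show p' + 1 + m - 1 = p' + m from by omega,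
    show p' + 1 + m = p' + m + 1 from by omega]
  rw [mul_comm]
  exact h.symm

lemma aux_N3 (r p : ℕ) (hp : 1 ≤ p) (hpr : p ≤ r) :
    r.choose p = (r - 1).choose (p - 1) + (r - 1).choose p := by
  obtain ⟨p', rfl⟩ : ∃ p', p = p' + 1 := ⟨p - 1, by omega⟩
  obtain ⟨m, rfl⟩ : ∃ m, r = p' + 1 + m := ⟨r - (p' + 1), by omega⟩
  simp only [show p' + 1 - 1 = p' from rfl, show p' + 1 + m - 1 = p' + m from by omega,
    show p' + 1 + m = (p' + m) + 1 from by omega]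
  exact Nat.choose_succ_succ (p' + m) p'

/-- Discriminant of the p-th exterior power, via Chern roots:
`(p−1) · [ (∑_{|S|=p} ∑_{i∈S} x_i)² − C(r,p) · ∑_{|S|=p} (∑_{i∈S} x_i)² ]
  = C(r−1,p) · C(r−2,p−2) · [ (∑_i x_i)² − r · ∑_i x_i² ]`. -/
theorem discr_wedge_pow (A : Type*) [CommRing A] (r p : ℕ) (hp : 2 ≤ p) (hpr : p ≤ r)
    (x : Fin r → A) :
    ((p - 1 : ℕ) : A) *
      ((∑ S ∈ Finset.univ.powersetCard p, ∑ i ∈ S, x i) ^ 2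
        - (r.choose p : A) * ∑ S ∈ Finset.univ.powersetCard p, (∑ i ∈ S, x i) ^ 2)
    = ((r - 1).choose p : A) * ((r - 2).choose (p - 2) : A) *
        ((∑ i, x i) ^ 2 - (r : A) * ∑ i, x i ^ 2) := by
  rw [aux_sum1 p (by omega) x, aux_sum2 p hp x]
  simp only [Fintype.card_fin]
  set s := ∑ i, x i with hs
  set q := ∑ i, x i ^ 2 with hq
  set a := ((r - 1).choose (p - 1) : A) with ha
  set b := (r.choose p : A) with hb
  set c := ((r - 2).choose (p - 2) : A) with hc
  set d := ((r - 1).choose p : A) with hd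
  have hp1 : ((p - 1 : ℕ) : A) = (p : A) - 1 := by
    rw [Nat.cast_sub (by omega)]; simp
  have h1 : ((p : A) - 1) * a = ((r : A) - 1) * c := by
    have := congrArg (Nat.cast : ℕ → A) (aux_N1 r p hp hpr)
    push_cast [Nat.cast_sub (show 1 ≤ p by omega), Nat.cast_sub (show 1 ≤ r by omega)] at this
    rw [ha, hc]
    convert this using 2
  have h2 : (p : A) * b = (r : A) * a := by
    have := congrArg (Nat.cast : ℕ → A) (aux_N2 r p (by omega) hpr)
    push_cast at this
    rw [hb, ha]; exact this
  have h3 : b = a + d := by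
    have := congrArg (Nat.cast : ℕ → A) (aux_N3 r p (by omega) hpr)
    push_cast at this
    rw [hb, ha, hd]; exact this
  have h4 : ((r : A) - 1) * a = d + ((p : A) - 1) * b := by linear_combination h3 - h2
  have h5 : ((r : A) - 1) * b = ((p : A) - 1) * b + (r : A) * d := by
    linear_combination ((r : A) - 1) * h3 + h4
  rw [hp1]
  linear_combination (s ^ 2) * (a * h1 + c * h4) + q * (-(b * h1) - c * h5)
end

section
/- Let A be a commutative ring, let a, b ∈ A, and let r, p be natural numbers with 2 ≤ p ≤ r. Then (p−1) · ( C(r−1,p−1)² · a² − C(r,p) · ( C(r−2,p−2) · a² + 2 · C(r−2,p−1) · b ) ) = C(r−1,p) · C(r−2,p−2) · ( a² − 2 · r · b ) in A. -/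
private lemma L1 (q s : ℕ) :
    ((q + 1 : ℤ)) * (((q + s + 1).choose (q + 1) : ℤ) ^ 2
        - ((q + s + 2).choose (q + 2) : ℤ) * ((q + s).choose q : ℤ))
    = ((q + s + 1).choose (q + 2) : ℤ) * ((q + s).choose q : ℤ) := by
  rcases s with _ | t
  · simp [Nat.choose_self, Nat.choose_eq_zero_of_lt (Nat.lt_succ_self (q+1))]
  · have key : ((q + 1 : ℚ)) * (((q + (t+1) + 1).choose (q + 1) : ℚ) ^ 2
        - ((q + (t+1) + 2).choose (q + 2) : ℚ) * ((q + (t+1)).choose q : ℚ))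
      = ((q + (t+1) + 1).choose (q + 2) : ℚ) * ((q + (t+1)).choose q : ℚ) := by
      rw [Nat.cast_choose ℚ (by omega : q + 1 ≤ q + (t+1) + 1),
          Nat.cast_choose ℚ (by omega : q + 2 ≤ q + (t+1) + 2),
          Nat.cast_choose ℚ (by omega : q ≤ q + (t+1)),
          Nat.cast_choose ℚ (by omega : q + 2 ≤ q + (t+1) + 1)]
      have e1 : q + (t+1) + 1 - (q + 1) = t + 1 := by omega
      have e2 : q + (t+1) + 2 - (q + 2) = t + 1 := by omega
      have e3 : q + (t+1) - q = t + 1 := by omega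
      have e4 : q + (t+1) + 1 - (q + 2) = t := by omega
      rw [e1, e2, e3, e4]
      have f1 : (Nat.factorial (q + (t+1) + 2) : ℚ) = (q+t+3) * ((q+t+2) * ((q+t+1) * (Nat.factorial (q+t)))) := by
        push_cast [show q + (t+1) + 2 = (q+t+2)+1 by ring, Nat.factorial_succ,
          show q+t+2 = (q+t+1)+1 by ring, show q+t+1 = (q+t)+1 by ring]
        ring
      have f2 : (Nat.factorial (q + (t+1) + 1) : ℚ) = (q+t+2) * ((q+t+1) * (Nat.factorial (q+t))) := by
        push_cast [show q + (t+1) + 1 = (q+t+1)+1 by ring, Nat.factorial_succ,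
          show q+t+1 = (q+t)+1 by ring]
        ring
      have f3 : (Nat.factorial (q + (t+1)) : ℚ) = (q+t+1) * (Nat.factorial (q+t)) := by
        push_cast [show q + (t+1) = (q+t)+1 by ring, Nat.factorial_succ]
        ring
      have f4 : (Nat.factorial (q + 2) : ℚ) = (q+2) * ((q+1) * (Nat.factorial q)) := by
        push_cast [show q + 2 = (q+1)+1 by ring, Nat.factorial_succ]
        ring
      have f5 : (Nat.factorial (q + 1) : ℚ) = (q+1) * (Nat.factorial q) := by
        push_cast [Nat.factorial_succ]; ring
      have f6 : (Nat.factorial (t + 1) : ℚ) = (t+1) * (Nat.factorial t) := by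
        push_cast [Nat.factorial_succ]; ring
      rw [f1, f2, f3, f4, f5, f6]
      have h1 : ((Nat.factorial q) : ℚ) ≠ 0 := by positivity
      have h2 : ((Nat.factorial t) : ℚ) ≠ 0 := by positivity
      have h3 : ((Nat.factorial (q+t)) : ℚ) ≠ 0 := by positivity
      field_simp
      ring
    push_cast at key ⊢; exact_mod_cast key

private lemma L2 (q s : ℕ) :
    ((q + 1 : ℤ)) * ((q + s + 2).choose (q + 2) : ℤ) * ((q + s).choose (q + 1) : ℤ)
    = ((q + s + 1).choose (q + 2) : ℤ) * ((q + s).choose q : ℤ) * (q + s + 2) := by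
  rcases s with _ | t
  · simp [Nat.choose_eq_zero_of_lt (Nat.lt_succ_self q),
      Nat.choose_eq_zero_of_lt (Nat.lt_succ_self (q+1))]
  · have key : ((q + 1 : ℚ)) * ((q + (t+1) + 2).choose (q + 2) : ℚ) * ((q + (t+1)).choose (q + 1) : ℚ)
      = ((q + (t+1) + 1).choose (q + 2) : ℚ) * ((q + (t+1)).choose q : ℚ) * (q + (t+1) + 2) := by
      rw [Nat.cast_choose ℚ (by omega : q + 2 ≤ q + (t+1) + 2),
          Nat.cast_choose ℚ (by omega : q + 1 ≤ q + (t+1)),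
          Nat.cast_choose ℚ (by omega : q + 2 ≤ q + (t+1) + 1),
          Nat.cast_choose ℚ (by omega : q ≤ q + (t+1))]
      have e2 : q + (t+1) + 2 - (q + 2) = t + 1 := by omega
      have e3 : q + (t+1) - (q + 1) = t := by omega
      have e4 : q + (t+1) + 1 - (q + 2) = t := by omega
      have e5 : q + (t+1) - q = t + 1 := by omega
      rw [e2, e3, e4, e5]
      have f1 : (Nat.factorial (q + (t+1) + 2) : ℚ) = (q+t+3) * ((q+t+2) * ((q+t+1) * (Nat.factorial (q+t)))) := by
        push_cast [show q + (t+1) + 2 = (q+t+2)+1 by ring, Nat.factorial_succ,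
          show q+t+2 = (q+t+1)+1 by ring, show q+t+1 = (q+t)+1 by ring]
        ring
      have f2 : (Nat.factorial (q + (t+1) + 1) : ℚ) = (q+t+2) * ((q+t+1) * (Nat.factorial (q+t))) := by
        push_cast [show q + (t+1) + 1 = (q+t+1)+1 by ring, Nat.factorial_succ,
          show q+t+1 = (q+t)+1 by ring]
        ring
      have f3 : (Nat.factorial (q + (t+1)) : ℚ) = (q+t+1) * (Nat.factorial (q+t)) := by
        push_cast [show q + (t+1) = (q+t)+1 by ring, Nat.factorial_succ]
        ring
      have f4 : (Nat.factorial (q + 2) : ℚ) = (q+2) * ((q+1) * (Nat.factorial q)) := by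
        push_cast [show q + 2 = (q+1)+1 by ring, Nat.factorial_succ]
        ring
      have f5 : (Nat.factorial (q + 1) : ℚ) = (q+1) * (Nat.factorial q) := by
        push_cast [Nat.factorial_succ]; ring
      have f6 : (Nat.factorial (t + 1) : ℚ) = (t+1) * (Nat.factorial t) := by
        push_cast [Nat.factorial_succ]; ring
      rw [f1, f2, f3, f4, f5, f6]
      have h1 : ((Nat.factorial q) : ℚ) ≠ 0 := by positivity
      have h2 : ((Nat.factorial t) : ℚ) ≠ 0 := by positivity
      have h3 : ((Nat.factorial (q+t)) : ℚ) ≠ 0 := by positivity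
      field_simp
      ring
    push_cast at key ⊢; exact_mod_cast key

/-- The cleared-denominator identity expressing `Δ(∧^p F) = λ_p · Δ(F)` in terms of
`a = ch₁(F)` and `b = ch₂(F)`. -/
theorem discr_wedge_identity (A : Type*) [CommRing A] (a b : A) (r p : ℕ)
    (hp : 2 ≤ p) (hpr : p ≤ r) :
    ((p - 1 : ℕ) : A) *
      (((r - 1).choose (p - 1) : A) ^ 2 * a ^ 2
        - (r.choose p : A) *
            (((r - 2).choose (p - 2) : A) * a ^ 2 + 2 * ((r - 2).choose (p - 1) : A) * b))
    = ((r - 1).choose p : A) * ((r - 2).choose (p - 2) : A) * (a ^ 2 - 2 * (r : A) * b) := by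
  obtain ⟨q, rfl⟩ : ∃ q, p = q + 2 := ⟨p - 2, by omega⟩
  obtain ⟨s, rfl⟩ : ∃ s, r = q + s + 2 := ⟨r - (q + 2), by omega⟩
  have eq1 : q + 2 - 1 = q + 1 := by omega
  have eq2 : q + 2 - 2 = q := by omega
  have eq3 : q + s + 2 - 1 = q + s + 1 := by omega
  have eq4 : q + s + 2 - 2 = q + s := by omega
  rw [eq1, eq2, eq3, eq4]
  have e1 : ((q + 1 : ℤ) * (((q + s + 1).choose (q + 1) : ℤ) ^ 2
        - ((q + s + 2).choose (q + 2) : ℤ) * ((q + s).choose q : ℤ)) : A)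
      = (((q + s + 1).choose (q + 2) : ℤ) * ((q + s).choose q : ℤ) : A) := by
    exact_mod_cast congrArg (Int.cast : ℤ → A) (L1 q s)
  have e2 : (((q + 1 : ℤ)) * ((q + s + 2).choose (q + 2) : ℤ) * ((q + s).choose (q + 1) : ℤ) : A)
      = (((q + s + 1).choose (q + 2) : ℤ) * ((q + s).choose q : ℤ) * (q + s + 2) : A) := by
    exact_mod_cast congrArg (Int.cast : ℤ → A) (L2 q s)
  push_cast at e1 e2 ⊢
  linear_combination a ^ 2 * e1 - 2 * b * e2
end

section
/- Let A be a commutative ring, r a natural number, p a natural number with 2 ≤ p ≤ r, and x : Fin r → A. Then ∑_{S ⊆ Fin r, |S|=p} (∑_{i∈S} x_i)² = C(r−2, p−2) · (∑_i x_i)² + C(r−2, p−1) · ∑_i x_i², where the outer sum ranges over all p-element subsets S of Fin r. -/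
open Finset

/-- Number of `p`-subsets of `s` containing a fixed subset `t`. -/
lemma count_supersets {α : Type*} [DecidableEq α] (s t : Finset α) (ht : t ⊆ s) (p : ℕ)
    (htp : t.card ≤ p) :
    ((s.powersetCard p).filter (fun S => t ⊆ S)).card
      = (s.card - t.card).choose (p - t.card) := by
  rw [← Finset.card_sdiff_of_subset ht, ← Finset.card_powersetCard]
  apply Finset.card_bij' (fun S _ => S \ t) (fun T _ => T ∪ t)
  · intro S hS
    simp only [mem_filter, mem_powersetCard] at hS
    obtain ⟨⟨hSs, hScard⟩, htS⟩ := hS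
    rw [mem_powersetCard]
    constructor
    · exact sdiff_subset_sdiff hSs (subset_refl t)
    · rw [Finset.card_sdiff_of_subset htS, hScard]
  · intro T hT
    rw [mem_powersetCard] at hT
    obtain ⟨hTs, hTcard⟩ := hT
    have hdisj : Disjoint T t := disjoint_of_subset_left hTs sdiff_disjoint
    simp only [mem_filter, mem_powersetCard]
    refine ⟨⟨?_, ?_⟩, subset_union_right⟩
    · exact union_subset (hTs.trans sdiff_subset) ht
    · rw [card_union_of_disjoint hdisj, hTcard]
      omega
  · intro S hS
    simp only [mem_filter] at hS
    exact sdiff_union_of_subset hS.2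
  · intro T hT
    rw [mem_powersetCard] at hT
    have hdisj : Disjoint T t := disjoint_of_subset_left hT.1 sdiff_disjoint
    exact union_sdiff_cancel_right hdisj

/-- Second Chern character of an exterior power via Chern roots (factor 2 cleared):
`∑_{|S|=p} (∑_{i∈S} x_i)² = C(r−2,p−2) · (∑_i x_i)² + C(r−2,p−1) · ∑_i x_i²`. -/
theorem ch2_wedge_pow (A : Type*) [CommRing A] (r p : ℕ) (hp : 2 ≤ p) (hpr : p ≤ r)
    (x : Fin r → A) :
    ∑ S ∈ Finset.univ.powersetCard p, (∑ i ∈ S, x i) ^ 2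
      = ((r - 2).choose (p - 2) : A) * (∑ i, x i) ^ 2
        + ((r - 2).choose (p - 1) : A) * ∑ i, x i ^ 2 := by
  have hr : 2 ≤ r := hp.trans hpr
  have key : ∀ i j : Fin r,
      (((Finset.univ.powersetCard p).filter (fun S => i ∈ S ∧ j ∈ S)).card : ℕ)
        = if i = j then (r - 1).choose (p - 1) else (r - 2).choose (p - 2) := by
    intro i j
    by_cases hij : i = j
    · subst hij
      simp only [if_pos rfl, and_self]
      have := count_supersets (Finset.univ : Finset (Fin r)) {i} (by simp) p (by rw [Finset.card_singleton]; omega)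
      simp only [Finset.singleton_subset_iff, Finset.card_singleton, Finset.card_univ,
        Fintype.card_fin] at this
      exact this
    · simp only [if_neg hij]
      have := count_supersets (Finset.univ : Finset (Fin r)) {i, j} (by simp) p ?_
      · have hc : ({i, j} : Finset (Fin r)).card = 2 := by
          rw [Finset.card_insert_of_notMem (by simpa using hij), Finset.card_singleton]
        rw [hc] at this
        simp only [Finset.card_univ, Fintype.card_fin] at this
        rw [← this]
        congr 1
        apply Finset.filter_congr
        intro S _
        simp [Finset.insert_subset_iff]
      · have hc : ({i, j} : Finset (Fin r)).card = 2 := by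
          rw [Finset.card_insert_of_notMem (by simpa using hij), Finset.card_singleton]
        omega
  calc ∑ S ∈ Finset.univ.powersetCard p, (∑ i ∈ S, x i) ^ 2
      = ∑ S ∈ Finset.univ.powersetCard p, ∑ i, ∑ j,
          (if i ∈ S ∧ j ∈ S then x i * x j else 0) := by
        refine Finset.sum_congr rfl fun S hS => ?_
        rw [sq, Finset.sum_mul_sum]
        rw [Finset.mem_powersetCard] at hS
        rw [← Finset.sum_subset (Finset.subset_univ S)
          (f := fun i => ∑ j, if i ∈ S ∧ j ∈ S then x i * x j else 0)]
        · refine Finset.sum_congr rfl fun i hi => ?_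
          rw [← Finset.sum_subset (Finset.subset_univ S)
            (f := fun j => if i ∈ S ∧ j ∈ S then x i * x j else 0)]
          · exact Finset.sum_congr rfl fun j hj => by simp [hi, hj]
          · intro j _ hj; simp [hj]
        · intro i _ hi
          refine Finset.sum_eq_zero fun j _ => by simp [hi]
    _ = ∑ i, ∑ j, ((((Finset.univ.powersetCard p).filter
          (fun S => i ∈ S ∧ j ∈ S)).card : A) * (x i * x j)) := by
        rw [Finset.sum_comm]
        refine Finset.sum_congr rfl fun i _ => ?_
        rw [Finset.sum_comm]
        refine Finset.sum_congr rfl fun j _ => ?_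
        rw [← Finset.sum_filter, Finset.sum_const, nsmul_eq_mul]
    _ = ((r - 2).choose (p - 2) : A) * (∑ i, x i) ^ 2
        + ((r - 2).choose (p - 1) : A) * ∑ i, x i ^ 2 := by
        have pascal : (r - 1).choose (p - 1) = (r - 2).choose (p - 2) + (r - 2).choose (p - 1) := by
          have h1 : r - 1 = (r - 2) + 1 := by omega
          have h2 : p - 1 = (p - 2) + 1 := by omega
          rw [h1, h2, Nat.choose_succ_succ, Nat.succ_eq_add_one, ← h2]
        simp only [key]
        have step : ∀ i : Fin r, ∑ j, ((if i = j then ((r - 1).choose (p - 1) : ℕ)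
            else (r - 2).choose (p - 2) : ℕ) : A) * (x i * x j)
            = ((r - 2).choose (p - 2) : A) * (x i * ∑ j, x j)
              + ((r - 2).choose (p - 1) : A) * x i ^ 2 := by
          intro i
          have : ∀ j : Fin r, ((if i = j then ((r - 1).choose (p - 1) : ℕ)
              else (r - 2).choose (p - 2) : ℕ) : A) * (x i * x j)
              = ((r - 2).choose (p - 2) : A) * (x i * x j)
                + (if j = i then ((r - 2).choose (p - 1) : A) * x i ^ 2 else 0) := by
            intro j
            by_cases hij : i = j
            · subst hij
              simp [pascal, sq]
              ring
            · simp [hij, Ne.symm hij]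
          rw [Finset.sum_congr rfl fun j _ => this j, Finset.sum_add_distrib,
            Finset.sum_ite_eq' Finset.univ i, ← Finset.mul_sum, Finset.mul_sum]
          simp [Finset.mul_sum]
        rw [Finset.sum_congr rfl fun i _ => step i, Finset.sum_add_distrib, ← Finset.mul_sum,
          ← Finset.mul_sum]
        congr 1
        rw [← Finset.sum_mul, sq]
end

section
/- For all natural numbers r, p with 2 ≤ p ≤ r, the natural number p−1 divides C(r−1,p) · C(r−2,p−2); that is, the coefficient λ_p = (1/(p−1))·C(r−1,p)·C(r−2,p−2) is an integer. -/
/-- The coefficient `λ_p = (1/(p−1))·C(r−1,p)·C(r−2,p−2)` is an integer. -/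
theorem lambda_p_integral (r p : ℕ) (hp : 2 ≤ p) (hpr : p ≤ r) :
    (p - 1) ∣ (r - 1).choose p * (r - 2).choose (p - 2) := by
  obtain ⟨a, rfl⟩ : ∃ a, p = a + 2 := ⟨p - 2, by omega⟩
  obtain ⟨b, rfl⟩ : ∃ b, r = a + b + 2 := ⟨r - (a + 2), by omega⟩
  show a + 1 ∣ (a + b + 1).choose (a + 2) * (a + b).choose a
  set A := (a + b + 1).choose (a + 1) with hA
  set C0 := (a + b).choose a with hC0
  set B := (a + b + 2).choose (a + 2) with hB
  set D := (a + b + 1).choose (a + 2) with hD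
  have L1 : (a + b + 1) * C0 = A * (a + 1) := Nat.add_one_mul_choose_eq (a + b) a
  have L2 : (a + b + 2) * A = B * (a + 2) := Nat.add_one_mul_choose_eq (a + b + 1) (a + 1)
  have L3 : D * (a + 2) = A * b := by
    have h := Nat.choose_succ_right_eq (a + b + 1) (a + 1)
    have : a + b + 1 - (a + 1) = b := by omega
    rwa [this] at h
  have L1' : ((a : ℤ) + b + 1) * C0 = A * (a + 1) := by exact_mod_cast L1
  have L2' : ((a : ℤ) + b + 2) * A = B * (a + 2) := by exact_mod_cast L2
  have L3' : (D : ℤ) * (a + 2) = A * b := by exact_mod_cast L3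
  have key : (D : ℤ) * C0 = ((a : ℤ) + 1) * ((A : ℤ) ^ 2 - B * C0) := by
    apply mul_left_cancel₀ (show ((a : ℤ) + 2) ≠ 0 by positivity)
    linear_combination (C0 : ℤ) * L3' - ((a : ℤ) + 1) * C0 * L2' + ((a : ℤ) + 2) * A * L1'
  have : ((a : ℤ) + 1) ∣ (D : ℤ) * C0 := ⟨(A : ℤ) ^ 2 - B * C0, key⟩
  exact_mod_cast this
end

section
/- Let A be a commutative ring, r a natural number, and x : Fin r → A. Then ( ∑_{(i,j) : i ≤ j} (x_i + x_j) )² − C(r+1,2) · ∑_{(i,j) : i ≤ j} (x_i + x_j)² = C(r+2,2) · ( (∑_i x_i)² − r · ∑_i x_i² ), where all pair sums range over pairs (i,j) of indices in Fin r with i ≤ j; that is, the discriminant of the second symmetric power satisfies Δ(Sym² F) = C(r+2,2) · Δ(F). -/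
open Finset

lemma pair_sum_aux {A : Type*} [AddCommMonoid A] {r : ℕ} (g : Fin r × Fin r → A) :
    ∑ q ∈ univ.filter (fun q : Fin r × Fin r => q.1 ≤ q.2), g q
      + ∑ q ∈ univ.filter (fun q : Fin r × Fin r => q.1 ≤ q.2), g q.swap
    = (∑ i : Fin r, ∑ j : Fin r, g (i, j)) + ∑ i : Fin r, g (i, i) := by
  have h1 : ∑ q ∈ univ.filter (fun q : Fin r × Fin r => q.1 ≤ q.2), g q.swap
      = ∑ q ∈ univ.filter (fun q : Fin r × Fin r => q.2 ≤ q.1), g q := by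
    refine Finset.sum_nbij' Prod.swap Prod.swap ?_ ?_ ?_ ?_ ?_ <;> simp
  rw [h1, Finset.sum_filter, Finset.sum_filter, ← Finset.sum_add_distrib]
  have key : ∀ q : Fin r × Fin r,
      ((if q.1 ≤ q.2 then g q else 0) + (if q.2 ≤ q.1 then g q else 0))
      = g q + (if q.1 = q.2 then g q else 0) := by
    intro q
    rcases lt_trichotomy q.1 q.2 with h | h | h
    · simp [h.le, h.ne, not_le.mpr h]
    · simp [h, le_of_eq h, le_of_eq h.symm]
    · simp [h.le, h.ne', not_le.mpr h]
  rw [Finset.sum_congr rfl fun q _ => key q, Finset.sum_add_distrib,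
    Fintype.sum_prod_type]
  congr 1
  rw [Fintype.sum_prod_type]
  simp

/-- Discriminant of the second symmetric power: `Δ(Sym² F) = C(r+2,2)·Δ(F)`, via Chern roots. -/
theorem discr_sym_sq (A : Type*) [CommRing A] (r : ℕ) (x : Fin r → A) :
    (∑ q ∈ Finset.univ.filter (fun q : Fin r × Fin r => q.1 ≤ q.2), (x q.1 + x q.2)) ^ 2
        - ((r + 1).choose 2 : A) *
            ∑ q ∈ Finset.univ.filter (fun q : Fin r × Fin r => q.1 ≤ q.2), (x q.1 + x q.2) ^ 2
      = ((r + 2).choose 2 : A) * ((∑ i, x i) ^ 2 - (r : A) * ∑ i, x i ^ 2) := by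
  set T := Finset.univ.filter (fun q : Fin r × Fin r => q.1 ≤ q.2) with hT
  -- e1 : first power sum
  have e1 : ∑ q ∈ T, (x q.1 + x q.2) = ((r : A) + 1) * ∑ i, x i := by
    have := pair_sum_aux (A := A) (r := r) (fun q => x q.1)
    rw [← hT] at this
    rw [Finset.sum_add_distrib]
    rw [show (∑ q ∈ T, x q.2) = ∑ q ∈ T, x q.swap.1 from rfl]
    rw [this]
    simp only [Finset.sum_const, Finset.card_univ, Fintype.card_fin, nsmul_eq_mul]
    rw [← Finset.mul_sum]
    ring
  have e2 : (∑ q ∈ T, x q.1 ^ 2) + (∑ q ∈ T, x q.2 ^ 2) = ((r : A) + 1) * ∑ i, x i ^ 2 := by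
    have := pair_sum_aux (A := A) (r := r) (fun q => x q.1 ^ 2)
    rw [← hT] at this
    rw [show (∑ q ∈ T, x q.2 ^ 2) = ∑ q ∈ T, x q.swap.1 ^ 2 from rfl, this]
    simp only [Finset.sum_const, Finset.card_univ, Fintype.card_fin, nsmul_eq_mul]
    rw [← Finset.mul_sum]
    ring
  have e3 : (∑ q ∈ T, x q.1 * x q.2) + (∑ q ∈ T, x q.2 * x q.1)
      = (∑ i, x i) ^ 2 + ∑ i, x i ^ 2 := by
    have := pair_sum_aux (A := A) (r := r) (fun q => x q.1 * x q.2)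
    rw [← hT] at this
    rw [show (∑ q ∈ T, x q.2 * x q.1) = ∑ q ∈ T, x q.swap.1 * x q.swap.2 from rfl, this]
    rw [sq (∑ i, x i), Finset.sum_mul_sum]
    congr 1
    exact Finset.sum_congr rfl fun i _ => (sq (x i)).symm
  have e5 : ∑ q ∈ T, (x q.1 + x q.2) ^ 2
      = (∑ q ∈ T, x q.1 ^ 2) + (∑ q ∈ T, x q.2 ^ 2)
        + ((∑ q ∈ T, x q.1 * x q.2) + (∑ q ∈ T, x q.2 * x q.1)) := by
    rw [← Finset.sum_add_distrib, ← Finset.sum_add_distrib, ← Finset.sum_add_distrib]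
    exact Finset.sum_congr rfl fun q _ => by ring
  have h3 : 2 * ((r + 1).choose 2 : A) = ((r : A) + 1) * (r : A) := by
    have hdvd : 2 ∣ (r + 1) * r := by
      rw [mul_comm]
      exact (Nat.even_mul_succ_self r).two_dvd
    have hnat : 2 * ((r + 1).choose 2) = (r + 1) * r := by
      rw [Nat.choose_two_right, Nat.succ_sub_one]
      exact Nat.mul_div_cancel' hdvd
    have hc := congrArg (Nat.cast : ℕ → A) hnat
    push_cast at hc
    linear_combination hc
  have h5 : ((r + 2).choose 2 : A) = ((r + 1).choose 2 : A) + ((r : A) + 1) := by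
    have : (r + 2).choose 2 = (r + 1).choose 2 + (r + 1) := by
      simp [Nat.choose_succ_succ, Nat.choose_one_right, Nat.add_comm]
    rw [this]; push_cast; ring
  linear_combination ((∑ q ∈ T, (x q.1 + x q.2) + ((r : A) + 1) * ∑ i, x i) * e1 -
    ((r + 1).choose 2 : A) * e5 - ((r + 1).choose 2 : A) * e2 - ((r + 1).choose 2 : A) * e3 +
    ((r : A) * ∑ i, x i ^ 2 - (∑ i, x i) ^ 2) * h5 -
    ((∑ i, x i ^ 2) + (∑ i, x i) ^ 2) * h3)
end
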